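/- The length of an affine permutation π ∈ S̃_n equals the number of equivalence classes of the set Inv(π) = {(i,j) ∈ ℤ × ℤ : i < j and π(i) > π(j)} under the relation (a,b) ~ (a',b') iff a - a' = b - b' ∈ nℤ. -/

import Mathlib

open scoped TensorProduct

/-- Membership in the affine symmetric group `S̃_n`, viewed inside `Equiv.Perm ℤ`. -/
def IsAffine (n : ℕ) (π : Equiv.Perm ℤ) : Prop :=
  (∀ i : ℤ, π (i + n) = π i + n) ∧
  (∑ i ∈ Finset.Icc (1 : ℤ) (n : ℤ), π i) = ∑ i ∈ Finset.Icc (1 : ℤ) (n : ℤ), i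

/-- The underlying function of the affine reflection `t_{ij}`. -/
def affTFun (n : ℕ) (i j k : ℤ) : ℤ :=
  if (k - i) % (n : ℤ) = 0 then k - i + j
  else if (k - j) % (n : ℤ) = 0 then k - j + i
  else k

theorem affTFun_involutive {n : ℕ} {i j : ℤ} (h : ¬ (j - i) % (n : ℤ) = 0) :
    Function.Involutive (affTFun n i j) := by
  have key : ∀ a : ℤ, a % (n : ℤ) = 0 ↔ (n : ℤ) ∣ a :=
    fun a => (@Int.dvd_iff_emod_eq_zero (n : ℤ) a).symm
  rw [key] at h
  intro k
  by_cases h1 : (n : ℤ) ∣ (k - i)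
  · have h2 : ¬ (n : ℤ) ∣ (k - i + j - i) := by
      intro hd
      apply h
      have h5 : j - i = (k - i + j - i) - (k - i) := by ring
      rw [h5]
      exact dvd_sub hd h1
    have h3 : (n : ℤ) ∣ (k - i + j - j) := by
      have h5 : k - i + j - j = k - i := by ring
      rw [h5]; exact h1
    have e1 : affTFun n i j k = k - i + j := by simp [affTFun, key, h1]
    have e2 : affTFun n i j (k - i + j) = k := by
      simp only [affTFun, key]
      rw [if_neg h2, if_pos h3]
      ring
    rw [e1, e2]
  · by_cases h2 : (n : ℤ) ∣ (k - j)
    · have h3 : (n : ℤ) ∣ (k - j + i - i) := by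
        have h5 : k - j + i - i = k - j := by ring
        rw [h5]; exact h2
      have e1 : affTFun n i j k = k - j + i := by simp [affTFun, key, h1, h2]
      have e2 : affTFun n i j (k - j + i) = k := by
        simp only [affTFun, key]
        rw [if_pos h3]
        ring
      rw [e1, e2]
    · have e1 : affTFun n i j k = k := by simp [affTFun, key, h1, h2]
      rw [e1, e1]

/-- The affine reflection `t_{ij}` (interpreted as the identity when `i ≡ j (mod n)`). -/
noncomputable def affT (n : ℕ) (i j : ℤ) : Equiv.Perm ℤ :=
  if h : (j - i) % (n : ℤ) = 0 then 1
  else Function.Involutive.toPerm _ (affTFun_involutive h)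

/-- The simple reflection `s_i = t_{i,i+1}` of `S̃_n`. -/
noncomputable def affS (n : ℕ) (i : ℤ) : Equiv.Perm ℤ := affT n i (i + 1)

/-- Coxeter length: minimal length of a word in the simple reflections `s_1, …, s_n`. -/
noncomputable def wordLength (n : ℕ) (π : Equiv.Perm ℤ) : ℕ :=
  sInf {l : ℕ | ∃ w : List ℤ,
    (∀ x ∈ w, 1 ≤ x ∧ x ≤ (n : ℤ)) ∧ (w.map (affS n)).prod = π ∧ w.length = l}

/-- The set of inversions of `π`, up to the diagonal translation relation. -/
def InvPair (π : Equiv.Perm ℤ) : Type :=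
  {p : ℤ × ℤ // p.1 < p.2 ∧ π p.2 < π p.1}

/-- The number of equivalence classes of inversions of `π` under
`(a,b) ~ (a + mn, b + mn)`. -/
noncomputable def invLength (n : ℕ) (π : Equiv.Perm ℤ) : ℕ :=
  Nat.card (Quot fun p q : InvPair π =>
    ∃ m : ℤ, q.1.1 = p.1.1 + m * n ∧ q.1.2 = p.1.2 + m * n)

/-- Entry `c_i` of the code of an affine permutation. -/
noncomputable def codeEntry (π : Equiv.Perm ℤ) (i : ℤ) : ℕ :=
  Nat.card {j : ℤ // i < j ∧ π j < π i}

/-- Entry `ĉ_i` of the involution code of an affine involution. -/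
noncomputable def icodeEntry (z : Equiv.Perm ℤ) (i : ℤ) : ℕ :=
  Nat.card {j : ℤ // i < j ∧ z j < z i ∧ z j ≤ i}

/-- `ℓ'(z)`: `n` minus the number of orbits of `z` acting on `ℤ/nℤ`. -/
noncomputable def lprime (n : ℕ) (z : Equiv.Perm ℤ) : ℕ :=
  n - Nat.card (Quot fun a b : ZMod n => ((z (a.val : ℤ) : ℤ) : ZMod n) = b)

/-- The characterizing properties of the Demazure (0-Hecke) product on `S̃_n`:
closure, associativity, `s_i ∘ s_i = s_i`, and agreement with the group product
on length-additive factorizations. -/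
def IsDemazure (n : ℕ) (D : Equiv.Perm ℤ → Equiv.Perm ℤ → Equiv.Perm ℤ) : Prop :=
  (∀ a b, IsAffine n a → IsAffine n b → IsAffine n (D a b)) ∧
  (∀ a b c, IsAffine n a → IsAffine n b → IsAffine n c →
    D (D a b) c = D a (D b c)) ∧
  (∀ i : ℤ, D (affS n i) (affS n i) = affS n i) ∧
  (∀ a b, IsAffine n a → IsAffine n b →
    wordLength n (a * b) = wordLength n a + wordLength n b → D a b = a * b)

/-- The set of Hecke atoms `{π : π⁻¹ ∘ π = z}`. -/
def AHecke (n : ℕ) (D : Equiv.Perm ℤ → Equiv.Perm ℤ → Equiv.Perm ℤ)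
    (z : Equiv.Perm ℤ) : Set (Equiv.Perm ℤ) :=
  {π | IsAffine n π ∧ D π⁻¹ π = z}

/-- The set of atoms: minimal-length Hecke atoms. -/
def DemAtoms (n : ℕ) (D : Equiv.Perm ℤ → Equiv.Perm ℤ → Equiv.Perm ℤ)
    (z : Equiv.Perm ℤ) : Set (Equiv.Perm ℤ) :=
  {π | π ∈ AHecke n D z ∧ ∀ σ ∈ AHecke n D z, wordLength n π ≤ wordLength n σ}

/-- The Bruhat covering relation on `S̃_n`. -/
def BruhatCov (n : ℕ) (a b : Equiv.Perm ℤ) : Prop :=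
  (∃ i j : ℤ, i < j ∧ (j - i) % (n : ℤ) ≠ 0 ∧ b = a * affT n i j) ∧
  wordLength n b = wordLength n a + 1

/-- The Bruhat order on `S̃_n`. -/
def BruhatLE (n : ℕ) : Equiv.Perm ℤ → Equiv.Perm ℤ → Prop :=
  Relation.ReflTransGen (BruhatCov n)

/-- The covering relation of the Bruhat order restricted to involutions in `S̃_n`. -/
def BruhatCovI (n : ℕ) (y z : Equiv.Perm ℤ) : Prop :=
  IsAffine n y ∧ IsAffine n z ∧ y⁻¹ = y ∧ z⁻¹ = z ∧
  BruhatLE n y z ∧ y ≠ z ∧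
  ∀ w : Equiv.Perm ℤ, IsAffine n w → w⁻¹ = w →
    BruhatLE n y w → BruhatLE n w z → w = y ∨ w = z

/-- Strict dominance order on partitions (written as weakly decreasing functions). -/
def DomLT (p q : ℕ → ℕ) : Prop :=
  p ≠ q ∧ ∀ k : ℕ, ∑ i ∈ Finset.range k, p i ≤ ∑ i ∈ Finset.range k, q i

/-- The shape `λ(π)`: the transpose of the partition sorting the code of `π⁻¹`,
recorded as the weakly decreasing function `k ↦ λ(π)_{k+1}`. -/
noncomputable def affShape (n : ℕ) (π : Equiv.Perm ℤ) : ℕ → ℕ :=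
  fun k => Multiset.countP (fun x => k < x)
    ((Finset.Icc (1 : ℤ) (n : ℤ)).val.map (codeEntry π⁻¹))

/-- The shape `μ(z)`: the transpose of the partition sorting the involution code of `z`,
recorded as the weakly decreasing function `k ↦ μ(z)_{k+1}`. -/
noncomputable def invShape (n : ℕ) (z : Equiv.Perm ℤ) : ℕ → ℕ :=
  fun k => Multiset.countP (fun x => k < x)
    ((Finset.Icc (1 : ℤ) (n : ℤ)).val.map (icodeEntry z))

/-- The weakly decreasing rearrangement of a multiset of naturals, padded by zeros. -/
noncomputable def rearr (s : Multiset ℕ) : ℕ → ℕ :=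
  fun k => ((s.sort (· ≤ ·)).reverse).getD k 0

/-- Remove the entries of a list of integers that repeat an earlier residue mod `n`. -/
def dedupMod (n : ℕ) : List ℤ → List ℤ
  | [] => []
  | x :: xs => x :: dedupMod n (xs.filter fun y => (y - x) % (n : ℤ) ≠ 0)
termination_by l => l.length
decreasing_by
  simp only [List.length_cons]
  exact Nat.lt_succ_of_le (List.length_unattach.trans_le
    ((List.length_filter_le _ _).trans List.length_attach.le))

/-- The window `[[z(a₁), a₁, z(a₂), a₂, …]]` of `α_min(z)⁻¹`, where `a₁ < a₂ < ⋯`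
are the elements `a ∈ [n]` with `a ≤ z(a)`. -/
noncomputable def aminWindow (n : ℕ) (z : Equiv.Perm ℤ) : List ℤ :=
  dedupMod n
    ((((Finset.Icc (1 : ℤ) (n : ℤ)).sort (· ≤ ·)).filter fun a => a ≤ z a).flatMap
      fun a => [z a, a])

/-- Cyclically decreasing elements of `S̃_n`. -/
def IsCycDec (n : ℕ) (π : Equiv.Perm ℤ) : Prop :=
  ∃ w : List ℤ,
    (∀ x ∈ w, 1 ≤ x ∧ x ≤ (n : ℤ)) ∧ (w.map (affS n)).prod = π ∧
    w.length = wordLength n π ∧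
    w.Pairwise fun a b => (a + 1 - b) % (n : ℤ) ≠ 0

/-- The coefficient of the monomial `∏ₖ xₖ₊₁^(α k)` in Lam's affine Stanley symmetric
function `F_π`: the number of length-additive factorizations of `π` into cyclically
decreasing factors of lengths prescribed by `α`. -/
noncomputable def stanleyCoeff (n : ℕ) (π : Equiv.Perm ℤ) (α : ℕ →₀ ℕ) : ℕ :=
  Nat.card {f : ℕ → Equiv.Perm ℤ //
    (∀ k, IsCycDec n (f k)) ∧ (∀ k, wordLength n (f k) = α k) ∧
    (∑ k ∈ α.support, α k) = wordLength n π ∧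
    ∃ N : ℕ, (∀ k, N ≤ k → f k = 1) ∧ ((List.range N).map f).prod = π}

/-- The set `Φ⁻_r(y)` of Bruhat covers of `y` of the form `τⁿ_{i r}(y)` with `i < r`
and `i ∉ {r, y(r)} + nℤ`. -/
def PhiMinus (n : ℕ) (τ : ℤ → ℤ → Equiv.Perm ℤ → Equiv.Perm ℤ)
    (y : Equiv.Perm ℤ) (r : ℤ) : Set (Equiv.Perm ℤ) :=
  {z | BruhatCovI n y z ∧ ∃ i : ℤ, i < r ∧ (i - r) % (n : ℤ) ≠ 0 ∧
    (i - y r) % (n : ℤ) ≠ 0 ∧ z = τ i r y}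

/-- The set `Φ⁺_r(y)` of Bruhat covers of `y` of the form `τⁿ_{r j}(y)` with `r < j`
and `j ∉ {r, y(r)} + nℤ`. -/
def PhiPlus (n : ℕ) (τ : ℤ → ℤ → Equiv.Perm ℤ → Equiv.Perm ℤ)
    (y : Equiv.Perm ℤ) (r : ℤ) : Set (Equiv.Perm ℤ) :=
  {z | BruhatCovI n y z ∧ ∃ j : ℤ, r < j ∧ (j - r) % (n : ℤ) ≠ 0 ∧
    (j - y r) % (n : ℤ) ≠ 0 ∧ z = τ r j y}

/-- The affine symmetric group as a subtype of `Equiv.Perm ℤ`. -/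
abbrev AffPerm (n : ℕ) := {π : Equiv.Perm ℤ // IsAffine n π}

/-- The coproduct `Δ(π) = Σ_{π ≐ π'π''} π' ⊗ π''` on `ℚ S̃_n`. -/
noncomputable def affComul (n : ℕ) :
    (AffPerm n →₀ ℚ) →ₗ[ℚ] TensorProduct ℚ (AffPerm n →₀ ℚ) (AffPerm n →₀ ℚ) :=
  Finsupp.lift _ ℚ _ fun π : AffPerm n =>
    ∑ᶠ p ∈ {p : AffPerm n × AffPerm n |
        p.1.val * p.2.val = π.val ∧
        wordLength n π.val = wordLength n p.1.val + wordLength n p.2.val},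
      (Finsupp.single p.1 (1 : ℚ)) ⊗ₜ[ℚ] (Finsupp.single p.2 (1 : ℚ))

/-!
Right multiplication by `s_i` acts on inversions by `(a, b) ↦ (s_i a, s_i b)`. Up to translation
by `nℤ`, this matches the inversions of `π` with those of `π s_i` except for the single class of
`(i, i + 1)`, so the number of classes goes up by one when `π i < π (i + 1)` and down by one
otherwise. Hence it is at most the length of any word for `π`. Conversely, an affine permutation
with an inversion has a descent `π (r + 1) < π r` at some `r ∈ [1, n]`, and one without inversions
is increasing, hence a translation, which the sum condition forces to be the identity; descending
along descents produces a word whose length is the number of classes.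
-/

section Equivariant
variable {n : ℕ} {f : ℤ → ℤ}

lemma periodic_sub_self (hf : ∀ k, f (k + n) = f k + n) :
    Function.Periodic (fun k => f k - k) (n : ℤ) :=
  fun k => by simp only [hf]; ring

lemma apply_add_mul (hf : ∀ k, f (k + n) = f k + n) (k m : ℤ) :
    f (k + m * n) = f k + m * n := by
  have : f (k + m * n) - (k + m * n) = f k - k := (periodic_sub_self hf).int_mul m k
  linarith

lemma mul_apply_add {σ τ : Equiv.Perm ℤ} (hσ : ∀ k, σ (k + n) = σ k + n)
    (hτ : ∀ k, τ (k + n) = τ k + n) (k : ℤ) : (σ * τ) (k + n) = (σ * τ) k + n := by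
  rw [Equiv.Perm.mul_apply, hτ, hσ, Equiv.Perm.mul_apply]

lemma exists_eq_add_mul (hn : 0 < n) (k : ℤ) :
    ∃ r m : ℤ, 1 ≤ r ∧ r ≤ n ∧ k = r + m * n := by
  have hn' : (0 : ℤ) < n := by exact_mod_cast hn
  refine ⟨(k - 1) % n + 1, (k - 1) / n, ?_, ?_, ?_⟩
  · linarith [Int.emod_nonneg (k - 1) hn'.ne']
  · linarith [Int.emod_lt_of_pos (k - 1) hn']
  · linarith [Int.emod_add_mul_ediv (k - 1) n, mul_comm ((k - 1) / n) (n : ℤ)]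

lemma exists_abs_sub_le (hn : 0 < n) (hf : ∀ k, f (k + n) = f k + n) :
    ∃ C, ∀ k, |f k - k| ≤ C := by
  refine ⟨∑ y ∈ Finset.Ico 0 (n : ℤ), |f y - y|, fun k => ?_⟩
  obtain ⟨y, hy, hky⟩ := (periodic_sub_self hf).exists_mem_Ico₀ (by exact_mod_cast hn) k
  rw [show f k - k = f y - y from hky]
  exact Finset.single_le_sum (f := fun y => |f y - y|) (fun _ _ => abs_nonneg _)
    (Finset.mem_Ico.mpr hy)

lemma sum_Ico_sub_eq (hn : 0 < n) (hf : ∀ k, f (k + n) = f k + n) (a b : ℤ) :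
    ∑ k ∈ Finset.Ico a (a + n), (f k - k) = ∑ k ∈ Finset.Ico b (b + n), (f k - k) := by
  have step (a : ℤ) : ∑ k ∈ Finset.Ico (a + 1) (a + 1 + n), (f k - k) =
      ∑ k ∈ Finset.Ico a (a + n), (f k - k) := by
    rw [← Finset.insert_Ico_add_one_left_eq_Ico (by omega : a < a + n), add_right_comm,
      ← Finset.insert_Ico_right_eq_Ico_add_one (by omega), Finset.sum_insert (by simp),
      Finset.sum_insert (by simp), show f (a + n) - (a + n) = f a - a from periodic_sub_self hf a]
  have key (a : ℤ) : ∑ k ∈ Finset.Ico a (a + n), (f k - k) =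
      ∑ k ∈ Finset.Ico (0 : ℤ) (0 + n), (f k - k) := by
    induction a using Int.induction_on with
    | zero => rfl
    | succ m ih => rw [step, ih]
    | pred m ih => rw [← ih, ← step, sub_add_cancel]
  rw [key a, key b]

end Equivariant

section Reflection
variable {n : ℕ}

lemma emod_sub_eq_zero_iff_modEq {a b : ℤ} : (a - b) % (n : ℤ) = 0 ↔ a ≡ b [ZMOD n] := by
  rw [← Int.dvd_iff_emod_eq_zero, Int.modEq_iff_dvd, dvd_sub_comm]

lemma not_add_one_modEq (hn : n ≠ 1) (i : ℤ) : ¬ i + 1 ≡ i [ZMOD n] := by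
  rw [Int.modEq_iff_dvd, sub_add_cancel_left, dvd_neg, Int.natCast_dvd_ofNat, Nat.dvd_one]
  exact hn

lemma exists_eq_add_mul_of_modEq {a i : ℤ} (h : a ≡ i [ZMOD n]) : ∃ m : ℤ, a = i + m * n := by
  obtain ⟨m, hm⟩ := Int.modEq_iff_dvd.1 h.symm
  exact ⟨m, by linarith⟩

lemma eq_of_modEq_of_le_of_lt {c k : ℤ} (h : k ≡ c [ZMOD n]) (hck : c ≤ k) (hkc : k < c + n) :
    k = c := by
  linarith [Int.eq_zero_of_dvd_of_nonneg_of_lt (by omega) (by omega) h.symm.dvd]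

lemma affT_apply_add (i j k : ℤ) : affT n i j (k + n) = affT n i j k + n := by
  unfold affT
  split_ifs
  · rfl
  · show affTFun n i j (k + n) = affTFun n i j k + n
    simp only [affTFun, show ∀ c, k + n - c = k - c + n from fun c => by ring,
      ← Int.emod_eq_add_self_emod]
    split_ifs <;> ring

lemma affS_apply_add (i k : ℤ) : affS n i (k + n) = affS n i k + n :=
  affT_apply_add i (i + 1) k

lemma affT_mul_self (i j : ℤ) : affT n i j * affT n i j = 1 := by
  unfold affT
  split_ifs with h
  · rfl
  · exact Equiv.ext (affTFun_involutive h)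

lemma affS_mul_self (i : ℤ) : affS n i * affS n i = 1 :=
  affT_mul_self i (i + 1)

lemma affS_apply_add_mul (i k m : ℤ) : affS n i (k + m * n) = affS n i k + m * n :=
  apply_add_mul (affS_apply_add i) k m

lemma affS_apply_affS (i k : ℤ) : affS n i (affS n i k) = k :=
  congrArg (· k) (affS_mul_self i)

lemma affS_apply (hn : n ≠ 1) (i k : ℤ) :
    affS n i k = if k ≡ i [ZMOD n] then k + 1 else if k ≡ i + 1 [ZMOD n] then k - 1 else k := by
  have h : ¬ (i + 1 - i) % (n : ℤ) = 0 := by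
    rw [emod_sub_eq_zero_iff_modEq]; exact not_add_one_modEq hn i
  rw [affS, affT, dif_neg h]
  show affTFun n i (i + 1) k = _
  simp only [affTFun, emod_sub_eq_zero_iff_modEq]
  split_ifs <;> ring

lemma affS_apply_of_modEq (hn : n ≠ 1) {i k : ℤ} (h : k ≡ i [ZMOD n]) :
    affS n i k = k + 1 := by
  rw [affS_apply hn, if_pos h]

lemma affS_apply_of_modEq_add_one (hn : n ≠ 1) {i k : ℤ} (h : k ≡ i + 1 [ZMOD n]) :
    affS n i k = k - 1 := by
  have : ¬ k ≡ i [ZMOD n] := fun h' => not_add_one_modEq hn i (h.symm.trans h')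
  rw [affS_apply hn, if_neg this, if_pos h]

lemma affS_apply_self (hn : n ≠ 1) (i : ℤ) : affS n i i = i + 1 :=
  affS_apply_of_modEq hn rfl

lemma affS_apply_add_one (hn : n ≠ 1) (i : ℤ) : affS n i (i + 1) = i := by
  rw [affS_apply_of_modEq_add_one hn rfl, add_sub_cancel_right]

lemma affS_apply_mem_Icc (hn : n ≠ 1) (i k : ℤ) :
    k - 1 ≤ affS n i k ∧ affS n i k ≤ k + 1 := by
  rw [affS_apply hn]
  split_ifs <;> omega

lemma affS_apply_eq_add_one_iff (hn : n ≠ 1) {i k : ℤ} :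
    affS n i k = k + 1 ↔ k ≡ i [ZMOD n] := by
  by_cases h : k ≡ i [ZMOD n]
  · simp [affS_apply_of_modEq hn h, h]
  · rw [affS_apply hn, if_neg h, iff_false_right h]
    split_ifs <;> omega

lemma affS_eqOn_swap (hn : n ≠ 1) (i : ℤ) :
    Set.EqOn (affS n i) (Equiv.swap i (i + 1)) (Set.Ico i (i + n)) := by
  rintro k ⟨hik, hki⟩
  rcases eq_or_ne k i with rfl | hk
  · rw [Equiv.swap_apply_left, affS_apply_self hn]
  rcases eq_or_ne k (i + 1) with rfl | hk'
  · rw [Equiv.swap_apply_right, affS_apply_add_one hn]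
  rw [Equiv.swap_apply_of_ne_of_ne hk hk', affS_apply hn,
    if_neg fun h => hk (eq_of_modEq_of_le_of_lt h hik hki),
    if_neg fun h => hk' (eq_of_modEq_of_le_of_lt h (by omega) (by omega))]

lemma affS_lt_affS_iff (hn : n ≠ 1) {i a b : ℤ} (hab : a < b) :
    affS n i b < affS n i a ↔ a ≡ i [ZMOD n] ∧ b = a + 1 := by
  constructor
  · intro h
    have ha := affS_apply_mem_Icc hn i a
    have hb := affS_apply_mem_Icc hn i b
    exact ⟨(affS_apply_eq_add_one_iff hn).1 (by omega), by omega⟩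
  · rintro ⟨ha, rfl⟩
    rw [affS_apply_of_modEq hn ha, affS_apply_of_modEq_add_one hn (ha.add_right 1)]
    omega

end Reflection

section Inversions
variable {n : ℕ} {π : Equiv.Perm ℤ}

def InvRel (n : ℕ) (π : Equiv.Perm ℤ) (p q : InvPair π) : Prop :=
  ∃ m : ℤ, q.1.1 = p.1.1 + m * n ∧ q.1.2 = p.1.2 + m * n

lemma invLength_eq_card_quot : invLength n π = Nat.card (Quot (InvRel n π)) := rfl

lemma finite_quot_invRel (hn : 0 < n) (hπ : ∀ k, π (k + n) = π k + n) :
    Finite (Quot (InvRel n π)) := by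
  obtain ⟨C, hC⟩ := exists_abs_sub_le hn hπ
  let T := {p : InvPair π // 1 ≤ p.1.1 ∧ p.1.1 ≤ n}
  have : Finite T := by
    let S := Finset.Icc (1 : ℤ) n ×ˢ Finset.Icc (1 : ℤ) (n + 2 * C)
    refine Finite.of_injective (β := S) (fun p => ⟨p.1.1, ?_⟩) ?_
    · obtain ⟨⟨⟨a, b⟩, hab, hba⟩, ha1, ha2⟩ := p
      have ha := abs_le.1 (hC a)
      have hb := abs_le.1 (hC b)
      dsimp only at hab hba ha1 ha2
      simp only [S, Finset.mem_product, Finset.mem_Icc]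
      omega
    · intro p q h
      simp only [Subtype.mk.injEq] at h
      exact Subtype.ext (Subtype.ext h)
  refine Finite.of_surjective (fun p : T => Quot.mk _ p.1) ?_
  rintro ⟨⟨⟨a, b⟩, hab, hba⟩⟩
  obtain ⟨r, m, hr1, hr2, rfl⟩ := exists_eq_add_mul hn a
  have hπb := apply_add_mul hπ b (-m)
  have hπa := apply_add_mul hπ r m
  refine ⟨⟨⟨(r, b + -m * n), by simp only at hab ⊢; linarith, ?_⟩, hr1, hr2⟩,
    Quot.sound ⟨m, rfl, by simp only; ring⟩⟩
  simp only at hba ⊢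
  linarith

lemma invLength_eq_zero_iff (hn : 0 < n) (hπ : ∀ k, π (k + n) = π k + n) :
    invLength n π = 0 ↔ IsEmpty (InvPair π) := by
  have := finite_quot_invRel hn hπ
  rw [invLength_eq_card_quot, Nat.card_eq_zero, or_iff_left (not_infinite_iff_finite.2 this)]
  exact ⟨fun h => ⟨fun p => h.false (Quot.mk _ p)⟩, fun _ => inferInstance⟩

lemma exists_descent (hn : 0 < n) (hπ : ∀ k, π (k + n) = π k + n) (h : Nonempty (InvPair π)) :
    ∃ r : ℤ, 1 ≤ r ∧ r ≤ n ∧ π (r + 1) < π r := by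
  obtain ⟨⟨⟨a, b⟩, hab, hba⟩⟩ := h
  obtain ⟨k, hk⟩ : ∃ k, π (k + 1) < π k := by
    by_contra! hmono
    exact (monotone_int_of_le_succ hmono hab.le).not_gt hba
  obtain ⟨r, m, hr1, hr2, rfl⟩ := exists_eq_add_mul hn k
  refine ⟨r, hr1, hr2, ?_⟩
  rw [add_right_comm, apply_add_mul hπ, apply_add_mul hπ] at hk
  linarith

lemma IsAffine.eq_one_of_isEmpty (hn : 0 < n) (hπ : IsAffine n π)
    (h : IsEmpty (InvPair π)) : π = 1 := by
  have hmono : StrictMono π := strictMono_int_of_lt_succ fun k =>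
    lt_of_not_ge fun hk => h.false ⟨(k, k + 1), by simp only; omega,
      lt_of_le_of_ne hk (π.injective.ne (by omega))⟩
  have hsucc : ∀ k, π (k + 1) = π k + 1 := fun k => by
    obtain ⟨j, hj⟩ := π.surjective (π k + 1)
    have hkj : k + 1 ≤ j := hmono.lt_iff_lt.1 (by omega)
    linarith [hmono.monotone hkj, hmono (lt_add_one k)]
  have hshift (k : ℤ) : π k = k + π 0 := by
    simpa [add_comm] using apply_add_mul (n := 1) (f := π) (by simpa using hsucc) 0 k
  have h0 : π 0 = 0 := by
    have := hπ.2
    rw [Finset.sum_congr rfl fun k _ => hshift k, Finset.sum_add_distrib, add_eq_left,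
      Finset.sum_const, Int.card_Icc, smul_eq_zero] at this
    omega
  ext k
  simp [hshift k, h0]

end Inversions

section Exchange
variable {n : ℕ} {π : Equiv.Perm ℤ} {i : ℤ}

lemma apply_lt_apply_add_one_of_modEq (hπ : ∀ k, π (k + n) = π k + n)
    (hi : π i < π (i + 1)) {a : ℤ} (ha : a ≡ i [ZMOD n]) : π a < π (a + 1) := by
  obtain ⟨m, rfl⟩ := exists_eq_add_mul_of_modEq ha
  rw [add_right_comm, apply_add_mul hπ, apply_add_mul hπ]
  linarith

/-- By `affS_lt_affS_iff`, the inversions `(a, b)` of `π * s_i` with `s_i b < s_i a` are the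
translates of `(i, i + 1)`; all others are carried by `s_i` to inversions of `π`. -/
noncomputable def invPairMulAffSToSum (p : InvPair (π * affS n i)) : Quot (InvRel n π) ⊕ Unit :=
  if h : affS n i p.1.2 < affS n i p.1.1 then Sum.inr ()
  else Sum.inl (Quot.mk _ ⟨(affS n i p.1.1, affS n i p.1.2),
    lt_of_le_of_ne (not_lt.1 h) ((affS n i).injective.ne p.2.1.ne), p.2.2⟩)

noncomputable def invPairToMulAffS (hn : n ≠ 1) (hπ : ∀ k, π (k + n) = π k + n)
    (hi : π i < π (i + 1)) (p : InvPair π) : InvPair (π * affS n i) :=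
  ⟨(affS n i p.1.1, affS n i p.1.2), lt_of_not_ge fun h => by
    obtain ⟨ha, hb⟩ := (affS_lt_affS_iff hn p.2.1).1
      (lt_of_le_of_ne h ((affS n i).injective.ne p.2.1.ne'))
    exact (apply_lt_apply_add_one_of_modEq hπ hi ha).not_gt (hb ▸ p.2.2), by
    simpa only [Equiv.Perm.mul_apply, affS_apply_affS] using p.2.2⟩

lemma invPairMulAffSToSum_eq_of_invRel {p q : InvPair (π * affS n i)}
    (h : InvRel n _ p q) : invPairMulAffSToSum p = invPairMulAffSToSum q := by
  rcases p with ⟨⟨a, b⟩, hab, hba⟩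
  rcases q with ⟨⟨a', b'⟩, hab', hba'⟩
  obtain ⟨m, h1, h2⟩ := h
  dsimp only at h1 h2
  subst h1 h2
  simp only [invPairMulAffSToSum, affS_apply_add_mul, add_lt_add_iff_right]
  split_ifs
  · rfl
  · exact congrArg Sum.inl (Quot.sound ⟨m, rfl, rfl⟩)

lemma invPairToMulAffS_invRel (hn : n ≠ 1) (hπ : ∀ k, π (k + n) = π k + n)
    (hi : π i < π (i + 1)) {p q : InvPair π} (h : InvRel n π p q) :
    InvRel n _ (invPairToMulAffS hn hπ hi p) (invPairToMulAffS hn hπ hi q) := by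
  obtain ⟨m, h1, h2⟩ := h
  exact ⟨m, by simp [invPairToMulAffS, h1, affS_apply_add_mul],
    by simp [invPairToMulAffS, h2, affS_apply_add_mul]⟩

def simpleInversion (hn : n ≠ 1) (hi : π i < π (i + 1)) : InvPair (π * affS n i) :=
  ⟨(i, i + 1), lt_add_one i, by
    simpa only [Equiv.Perm.mul_apply, affS_apply_self hn, affS_apply_add_one hn] using hi⟩

noncomputable def quotInvRelMulAffSEquiv (hn : n ≠ 1) (hπ : ∀ k, π (k + n) = π k + n)
    (hi : π i < π (i + 1)) : Quot (InvRel n (π * affS n i)) ≃ Quot (InvRel n π) ⊕ Unit where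
  toFun := Quot.lift invPairMulAffSToSum fun _ _ => invPairMulAffSToSum_eq_of_invRel
  invFun := Sum.elim
    (Quot.lift (fun p => Quot.mk _ (invPairToMulAffS hn hπ hi p))
      fun _ _ h => Quot.sound (invPairToMulAffS_invRel hn hπ hi h))
    fun _ => Quot.mk _ (simpleInversion hn hi)
  left_inv := by
    rintro ⟨⟨⟨a, b⟩, hab, hba⟩⟩
    dsimp only at hab
    simp only [invPairMulAffSToSum]
    split_ifs with h
    · obtain ⟨ha, rfl⟩ := (affS_lt_affS_iff hn hab).1 h
      obtain ⟨m, rfl⟩ := exists_eq_add_mul_of_modEq ha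
      exact Quot.sound ⟨m, rfl, by simp only [simpleInversion]; ring⟩
    · exact congrArg _ (Subtype.ext (by simp [invPairToMulAffS, affS_apply_affS]))
  right_inv := by
    rintro (⟨⟨⟨a, b⟩, hab, hba⟩⟩ | ⟨⟩)
    · simp only [Sum.elim_inl, invPairMulAffSToSum, invPairToMulAffS,
        affS_apply_affS, dif_neg hab.not_gt]
    · simp only [Sum.elim_inr, invPairMulAffSToSum, simpleInversion, affS_apply_self hn,
        affS_apply_add_one hn, lt_add_one, dif_pos]

lemma invLength_mul_affS_of_lt (hn : 1 < n) (hπ : ∀ k, π (k + n) = π k + n)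
    (hi : π i < π (i + 1)) : invLength n (π * affS n i) = invLength n π + 1 := by
  have := finite_quot_invRel (by omega) hπ
  rw [invLength_eq_card_quot, invLength_eq_card_quot,
    Nat.card_congr (quotInvRelMulAffSEquiv hn.ne' hπ hi), Nat.card_sum,
    Nat.card_unique (α := Unit)]

end Exchange

section Length
variable {n : ℕ} {π : Equiv.Perm ℤ}

lemma sum_Icc_eq_iff_sum_Ico_sub_eq_zero (f : ℤ → ℤ) :
    ∑ k ∈ Finset.Icc (1 : ℤ) n, f k = ∑ k ∈ Finset.Icc (1 : ℤ) n, k ↔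
      ∑ k ∈ Finset.Ico (1 : ℤ) (1 + n), (f k - k) = 0 := by
  rw [add_comm, Finset.Ico_add_one_right_eq_Icc, Finset.sum_sub_distrib, sub_eq_zero]

lemma IsAffine.mul_affS (hn : 1 < n) (hπ : IsAffine n π) (i : ℤ) :
    IsAffine n (π * affS n i) := by
  have hper := mul_apply_add hπ.1 (affS_apply_add i)
  refine ⟨hper, ?_⟩
  have hsum := hπ.2
  rw [sum_Icc_eq_iff_sum_Ico_sub_eq_zero] at hsum ⊢
  rw [sum_Ico_sub_eq (by omega) hper 1 i, ← hsum, sum_Ico_sub_eq (by omega) hπ.1 1 i,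
    Finset.sum_sub_distrib, Finset.sum_sub_distrib]
  congr 1
  calc ∑ k ∈ Finset.Ico i (i + n), π (affS n i k)
      = ∑ k ∈ Finset.Ico i (i + n), π (Equiv.swap i (i + 1) k) :=
        Finset.sum_congr rfl fun k hk => by
          rw [affS_eqOn_swap hn.ne' i (Finset.coe_Ico i (i + n) ▸ Finset.mem_coe.2 hk)]
    _ = ∑ k ∈ Finset.Ico i (i + n), π k := by
        refine Equiv.Perm.sum_comp _ _ _ fun k hk => ?_
        rw [Set.mem_ofPred_eq, Equiv.swap_apply_ne_self_iff] at hk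
        simp only [Finset.coe_Ico, Set.mem_Ico]
        omega

lemma affS_one (i : ℤ) : affS 1 i = 1 :=
  dif_pos (Int.emod_one _)

lemma invLength_one : invLength n 1 = 0 := by
  have : IsEmpty (InvPair (1 : Equiv.Perm ℤ)) := ⟨fun p => p.2.1.not_gt p.2.2⟩
  exact Nat.card_of_isEmpty

lemma invLength_mul_affS_of_gt (hn : 1 < n) (hπ : ∀ k, π (k + n) = π k + n) {i : ℤ}
    (hi : π (i + 1) < π i) : invLength n (π * affS n i) + 1 = invLength n π := by
  have hper := mul_apply_add hπ (affS_apply_add i)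
  have hasc : (π * affS n i) i < (π * affS n i) (i + 1) := by
    simpa only [Equiv.Perm.mul_apply, affS_apply_self hn.ne', affS_apply_add_one hn.ne'] using hi
  rw [← invLength_mul_affS_of_lt hn hper hasc, mul_assoc, affS_mul_self, mul_one]

lemma invLength_mul_affS_le (hn : 0 < n) (hπ : ∀ k, π (k + n) = π k + n) (i : ℤ) :
    invLength n (π * affS n i) ≤ invLength n π + 1 := by
  obtain rfl | hn := (Nat.one_le_iff_ne_zero.2 hn.ne').eq_or_lt
  · rw [affS_one, mul_one]; omega
  rcases lt_trichotomy (π i) (π (i + 1)) with h | h | h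
  · exact (invLength_mul_affS_of_lt hn hπ h).le
  · exact absurd (π.injective h) (by omega)
  · have := invLength_mul_affS_of_gt hn hπ h; omega

lemma prod_map_affS_apply_add (w : List ℤ) (k : ℤ) :
    (w.map (affS n)).prod (k + n) = (w.map (affS n)).prod k + n := by
  induction w generalizing k with
  | nil => rfl
  | cons x w ih =>
    rw [List.map_cons, List.prod_cons]
    exact mul_apply_add (affS_apply_add x) ih k

lemma invLength_prod_map_affS_le (hn : 0 < n) (w : List ℤ) :
    invLength n (w.map (affS n)).prod ≤ w.length := by
  induction w using List.reverseRecOn with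
  | nil => simp [invLength_one]
  | append_singleton w x ih =>
    simp only [List.map_append, List.prod_append, List.map_singleton, List.prod_singleton,
      List.length_append, List.length_singleton]
    exact (invLength_mul_affS_le hn (prod_map_affS_apply_add w) x).trans (by omega)

lemma IsAffine.exists_word_length_eq_invLength (hn : 0 < n) (hπ : IsAffine n π) :
    ∃ w : List ℤ, (∀ x ∈ w, 1 ≤ x ∧ x ≤ (n : ℤ)) ∧ (w.map (affS n)).prod = π ∧
      w.length = invLength n π := by
  induction h : invLength n π generalizing π with
  | zero =>
    exact ⟨[], by simp, by simp [hπ.eq_one_of_isEmpty hn ((invLength_eq_zero_iff hn hπ.1).1 h)],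
      rfl⟩
  | succ N ih =>
    have hne : Nonempty (InvPair π) := by
      rw [← not_isEmpty_iff, ← invLength_eq_zero_iff hn hπ.1, h]; omega
    obtain ⟨r, hr1, hr2, hr⟩ := exists_descent hn hπ.1 hne
    have hn2 : 1 < n := by
      by_contra! h1
      obtain rfl : n = 1 := by omega
      have := hπ.1 r
      rw [Nat.cast_one] at this
      omega
    obtain ⟨w, hw, hprod, hlen⟩ := ih (hπ.mul_affS hn2 r)
      (by have := invLength_mul_affS_of_gt hn2 hπ.1 hr; omega)
    refine ⟨w ++ [r], fun x hx => ?_, ?_, by simp [hlen]⟩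
    · rcases List.mem_append.1 hx with hx | hx
      · exact hw x hx
      · rw [List.mem_singleton.1 hx]; exact ⟨hr1, hr2⟩
    · rw [List.map_append, List.prod_append, hprod, List.map_singleton, List.prod_singleton,
        mul_assoc, affS_mul_self, mul_one]

end Length

/-- the Coxeter length of an affine permutation equals the number of
equivalence classes of its inversion set under diagonal translation by `nℤ`. -/
theorem wordLength_eq_invLength (n : ℕ) (hn : 0 < n)
    (π : Equiv.Perm ℤ) (hπ : IsAffine n π) :
    wordLength n π = invLength n π := by
  obtain ⟨w, hw, hprod, hlen⟩ := hπ.exists_word_length_eq_invLength hn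
  refine le_antisymm ?_ (le_csInf ⟨_, w, hw, hprod, rfl⟩ ?_)
  · rw [← hlen]
    exact Nat.sInf_le ⟨w, hw, hprod, rfl⟩
  · rintro _ ⟨w', -, rfl, rfl⟩
    exact invLength_prod_map_affS_le hn w'
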